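/- arXiv:1801.02675 — 2 statements merged into one kernel-verified Lean document; each statement's English description precedes it below -/
import Mathlib

section
/- Let K_1,…,K_{n−1} be convex bodies in ℝⁿ and let u ∈ S^{n−1}. Then the mixed area measure of the singleton {u} equals the (n−1)-dimensional mixed volume of the faces: S(K_1,…,K_{n−1},{u}) = V(K_1^u,…,K_{n−1}^u), where the faces K_i^u are translated into the hyperplane u^⊥ and the mixed volume on the right is the (n−1)-dimensional mixed volume computed in u^⊥. -/
open scoped Pointwise NNReal ENNReal
open MeasureTheory Metric Set Filter

noncomputable section

abbrev Euc (n : ℕ) : Type := EuclideanSpace ℝ (Fin n)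

/-- A convex body: a compact convex set with nonempty interior. -/
def IsConvexBody {n : ℕ} (K : Set (Euc n)) : Prop :=
  Convex ℝ K ∧ IsCompact K ∧ (interior K).Nonempty

/-- The mixed volume of `n` compact convex sets in `ℝⁿ`, via the polarization formula. -/
noncomputable def mixedVolume {n : ℕ} (K : Fin n → Set (Euc n)) : ℝ :=
  (n.factorial : ℝ)⁻¹ *
    ∑ S ∈ Finset.univ.powerset.filter (fun S : Finset (Fin n) => S.Nonempty),
      (-1 : ℝ) ^ (n - S.card) * (volume (∑ i ∈ S, K i)).toReal

/-- The support function of a set. -/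
noncomputable def suppFn {n : ℕ} (K : Set (Euc n)) (u : Euc n) : ℝ :=
  sSup ((fun x => (inner ℝ x u : ℝ)) '' K)

/-- The face of `K` with outer normal `u`. -/
def face {n : ℕ} (K : Set (Euc n)) (u : Euc n) : Set (Euc n) :=
  {x ∈ K | (inner ℝ x u : ℝ) = suppFn K u}

/-- The surface area measure of `K`, as a set function:
`S_K(Ω) = H^{n-1}(τ(K,Ω))` where `τ(K,Ω)` is the inverse spherical image. -/
noncomputable def surfMeas {n : ℕ} (K : Set (Euc n)) (Ω : Set (Euc n)) : ℝ≥0∞ :=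
  μH[(n : ℝ) - 1] {x | x ∈ frontier K ∧ ∃ u ∈ Ω, ‖u‖ = 1 ∧ (inner ℝ x u : ℝ) = suppFn K u}

/-- The mixed area measure `S(K_1,…,K_{n-1}, Ω)` via the polarization formula. -/
noncomputable def mixedAreaMeas {n : ℕ} (K : Fin (n - 1) → Set (Euc n)) (Ω : Set (Euc n)) : ℝ :=
  ((n - 1).factorial : ℝ)⁻¹ *
    ∑ S ∈ Finset.univ.powerset.filter (fun S : Finset (Fin (n - 1)) => S.Nonempty),
      (-1 : ℝ) ^ (n - 1 - S.card) * (surfMeas (∑ i ∈ S, K i) Ω).toReal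

/-- The `m`-dimensional mixed volume of `m` compact convex sets lying in (translates of) an
`m`-dimensional subspace of `ℝⁿ`, computed with the `m`-dimensional Hausdorff measure. -/
noncomputable def hausdorffMixedVolume {n : ℕ} (m : ℕ) (K : Fin m → Set (Euc n)) : ℝ :=
  (m.factorial : ℝ)⁻¹ *
    ∑ S ∈ Finset.univ.powerset.filter (fun S : Finset (Fin m) => S.Nonempty),
      (-1 : ℝ) ^ (m - S.card) * (μH[(m : ℝ)] (∑ i ∈ S, K i)).toReal

/-- The Wulff shape of a function `g` (only the values of `g` on the unit sphere matter). -/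
def wulff {n : ℕ} (g : Euc n → ℝ) : Set (Euc n) :=
  {x | ∀ u : Euc n, ‖u‖ = 1 → (inner ℝ x u : ℝ) ≤ g u}

/-- `A` is homothetic to `B` if `A = λ • B + v` for some `λ > 0`, `v ∈ ℝⁿ`. -/
def Homothetic {n : ℕ} (A B : Set (Euc n)) : Prop :=
  ∃ lam : ℝ, 0 < lam ∧ ∃ v : Euc n, A = (fun x => lam • x + v) '' B

/-- `K` is weakly decomposable if there is a nonempty compact convex set `M`, not homothetic
to `K`, with `S_{K+M}` absolutely continuous with respect to `S_K`. -/
def WeaklyDecomposable {n : ℕ} (K : Set (Euc n)) : Prop :=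
  ∃ M : Set (Euc n), Convex ℝ M ∧ IsCompact M ∧ M.Nonempty ∧ ¬ Homothetic M K ∧
    ∀ Ω : Set (Euc n), MeasurableSet Ω → surfMeas K Ω = 0 → surfMeas (K + M) Ω = 0

def IsSimplex {n : ℕ} (K : Set (Euc n)) : Prop :=
  ∃ p : Fin (n + 1) → Euc n, AffineIndependent ℝ p ∧ K = convexHull ℝ (Set.range p)

def IsPolytope {n : ℕ} (K : Set (Euc n)) : Prop :=
  ∃ S : Finset (Euc n), K = convexHull ℝ (S : Set (Euc n))

/-- The set of outer unit normals of facets ((n-1)-dimensional faces) of `K`. -/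
def facetNormals {n : ℕ} (K : Set (Euc n)) : Set (Euc n) :=
  {u | ‖u‖ = 1 ∧ Module.finrank ℝ (affineSpan ℝ (face K u)).direction = n - 1}

/-- A zonotope: a finite Minkowski sum of segments. -/
def IsZonotope {n : ℕ} (Z : Set (Euc n)) : Prop :=
  ∃ (m : ℕ) (v w : Fin m → Euc n), Z = ∑ i : Fin m, segment ℝ (v i) (w i)

/-- A zonoid: a compact convex set which is a Hausdorff-metric limit of zonotopes. -/
def IsZonoid {n : ℕ} (K : Set (Euc n)) : Prop :=
  IsCompact K ∧ Convex ℝ K ∧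
    ∃ Z : ℕ → Set (Euc n), (∀ m, IsZonotope (Z m)) ∧
      Tendsto (fun m => EMetric.hausdorffEdist (Z m) K) atTop (nhds 0)


/-!
Faces are additive under Minkowski sums of compact sets: `(A + B)ᵘ = Aᵘ + Bᵘ`, because
`h_{A+B} = h_A + h_B` and a sum `a + b` attains `h_{A+B}(u)` only if both summands attain
their maxima. For a unit vector `u` the inverse spherical image `τ(L, {u})` is exactly the face
`Lᵘ`, since a face of a compact set lies on its boundary. Hence every term
`S_{K_{i₁}+⋯+K_{iₖ}}({u})` of the polarization formula is `H^{n-1}(K_{i₁}ᵘ + ⋯ + K_{iₖ}ᵘ)`, the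
matching term of the mixed volume of the faces.
-/

section Faces

variable {n : ℕ}

lemma isGreatest_suppFn {K : Set (Euc n)} (hK : IsCompact K) (hne : K.Nonempty) (u : Euc n) :
    IsGreatest ((fun x => (inner ℝ x u : ℝ)) '' K) (suppFn K u) :=
  have himg := hK.image (continuous_id.inner continuous_const :
    Continuous fun x : Euc n => (inner ℝ x u : ℝ))
  ⟨himg.sSup_mem (hne.image _), fun _ hx => le_csSup himg.bddAbove hx⟩

lemma inner_le_suppFn {K : Set (Euc n)} (hK : IsCompact K) {x : Euc n} (hx : x ∈ K) (u : Euc n) :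
    (inner ℝ x u : ℝ) ≤ suppFn K u :=
  (isGreatest_suppFn hK ⟨x, hx⟩ u).2 ⟨x, hx, rfl⟩

lemma suppFn_add {A B : Set (Euc n)} (hA : IsCompact A) (hAne : A.Nonempty)
    (hB : IsCompact B) (hBne : B.Nonempty) (u : Euc n) :
    suppFn (A + B) u = suppFn A u + suppFn B u := by
  obtain ⟨a, ha, hau⟩ := (isGreatest_suppFn hA hAne u).1
  obtain ⟨b, hb, hbu⟩ := (isGreatest_suppFn hB hBne u).1
  refine IsGreatest.csSup_eq ⟨⟨a + b, Set.add_mem_add ha hb, ?_⟩, ?_⟩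
  · simp only [inner_add_left, hau, hbu]
  · rintro _ ⟨_, ⟨p, hp, q, hq, rfl⟩, rfl⟩
    simp only [inner_add_left]
    exact add_le_add (inner_le_suppFn hA hp u) (inner_le_suppFn hB hq u)

lemma face_add {A B : Set (Euc n)} (hA : IsCompact A) (hAne : A.Nonempty)
    (hB : IsCompact B) (hBne : B.Nonempty) (u : Euc n) :
    face (A + B) u = face A u + face B u := by
  ext x
  constructor
  · rintro ⟨⟨p, hp, q, hq, rfl⟩, hpq⟩
    rw [inner_add_left, suppFn_add hA hAne hB hBne] at hpq
    have hpA := inner_le_suppFn hA hp u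
    have hqB := inner_le_suppFn hB hq u
    exact Set.add_mem_add ⟨hp, by linarith⟩ ⟨hq, by linarith⟩
  · rintro ⟨p, ⟨hp, hpu⟩, q, ⟨hq, hqu⟩, rfl⟩
    refine ⟨Set.add_mem_add hp hq, ?_⟩
    rw [inner_add_left, hpu, hqu, suppFn_add hA hAne hB hBne]

lemma face_zero (u : Euc n) : face 0 u = 0 := by
  have hsupp : suppFn (0 : Set (Euc n)) u = 0 := by simp [suppFn]
  ext x
  simp +contextual [face, hsupp]

lemma isCompact_sum_and_nonempty {ι : Type*} (S : Finset ι) {K : ι → Set (Euc n)}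
    (hK : ∀ i, IsCompact (K i) ∧ (K i).Nonempty) :
    IsCompact (∑ i ∈ S, K i) ∧ (∑ i ∈ S, K i).Nonempty :=
  Finset.sum_induction K (fun A => IsCompact A ∧ A.Nonempty)
    (fun _ _ hA hB => ⟨hA.1.add hB.1, hA.2.add hB.2⟩)
    ⟨Set.singleton_zero (α := Euc n) ▸ isCompact_singleton, Set.zero_nonempty⟩ fun i _ => hK i

lemma face_sum {ι : Type*} (S : Finset ι) {K : ι → Set (Euc n)}
    (hK : ∀ i, IsCompact (K i) ∧ (K i).Nonempty) (u : Euc n) :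
    face (∑ i ∈ S, K i) u = ∑ i ∈ S, face (K i) u := by
  classical
  induction S using Finset.induction with
  | empty => exact face_zero u
  | insert a s ha ih =>
    obtain ⟨hs, hsne⟩ := isCompact_sum_and_nonempty s hK
    rw [Finset.sum_insert ha, Finset.sum_insert ha, face_add (hK a).1 (hK a).2 hs hsne, ih]

-- The linear functional `⟪·, u⟫` attains its maximum over `K` on the face; at an interior
-- point this would be a local maximum, forcing its derivative `⟪u, ·⟫` to vanish.
lemma face_subset_frontier {K : Set (Euc n)} (hK : IsCompact K) {u : Euc n} (hu : u ≠ 0) :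
    face K u ⊆ frontier K := by
  rintro x ⟨hxK, hxu⟩
  rw [hK.isClosed.frontier_eq]
  refine ⟨hxK, fun hint => hu ?_⟩
  have hmax : IsLocalMax (fun y => (inner ℝ u y : ℝ)) x :=
    Filter.mem_of_superset (mem_interior_iff_mem_nhds.mp hint) fun y hy =>
      show (inner ℝ u y : ℝ) ≤ inner ℝ u x by
        rw [← real_inner_comm u y, ← real_inner_comm u x, hxu]
        exact inner_le_suppFn hK hy u
  have hderiv := hmax.hasFDerivAt_eq_zero (innerSL ℝ u).hasFDerivAt
  simpa using congr($hderiv u)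

lemma surfMeas_singleton {L : Set (Euc n)} (hL : IsCompact L) {u : Euc n} (hu : ‖u‖ = 1) :
    surfMeas L {u} = μH[(n : ℝ) - 1] (face L u) := by
  have hu0 : u ≠ 0 := by rintro rfl; simp at hu
  unfold surfMeas
  congr 1
  ext x
  constructor
  · rintro ⟨hx, v, rfl, -, hxv⟩
    exact ⟨hL.isClosed.frontier_subset hx, hxv⟩
  · intro hx
    exact ⟨face_subset_frontier hL hu0 hx, u, rfl, hu, hx.2⟩

lemma mixedAreaMeas_eq_hausdorffMixedVolume (K L : Fin (n - 1) → Set (Euc n)) (Ω : Set (Euc n))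
    (hKL : ∀ S : Finset (Fin (n - 1)),
      surfMeas (∑ i ∈ S, K i) Ω = μH[(n : ℝ) - 1] (∑ i ∈ S, L i)) :
    mixedAreaMeas K Ω = hausdorffMixedVolume (n - 1) L := by
  unfold mixedAreaMeas hausdorffMixedVolume
  congr 1
  refine Finset.sum_congr rfl fun S hS => ?_
  -- a nonempty `S ⊆ Fin (n - 1)` rules out the truncated case `n = 0`
  obtain ⟨i, -⟩ := (Finset.mem_filter.mp hS).2
  rw [hKL, Nat.cast_pred (by have := i.pos; omega : 0 < n)]

end Faces

theorem mixedAreaMeas_singleton_general (n : ℕ) (K : Fin (n - 1) → Set (Euc n))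
    (hK : ∀ i, IsConvexBody (K i)) (u : Euc n) (hu : ‖u‖ = 1) :
    mixedAreaMeas K {u} = hausdorffMixedVolume (n - 1) (fun i => face (K i) u) := by
  have hcompact : ∀ i, IsCompact (K i) ∧ (K i).Nonempty :=
    fun i => ⟨(hK i).2.1, (hK i).2.2.mono interior_subset⟩
  refine mixedAreaMeas_eq_hausdorffMixedVolume K _ {u} fun S => ?_
  rw [surfMeas_singleton (isCompact_sum_and_nonempty S hcompact).1 hu, face_sum S hcompact u]

/-- For convex bodies `K₁,…,K_{n-1}` and `u ∈ S^{n-1}`, the mixed area measure of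
the singleton `{u}` equals the `(n-1)`-dimensional mixed volume of the faces `K₁ᵘ,…,K_{n-1}ᵘ`. -/
theorem mixedAreaMeas_singleton (n : ℕ) (hn : 1 ≤ n) (K : Fin (n - 1) → Set (Euc n))
    (hK : ∀ i, IsConvexBody (K i)) (u : Euc n) (hu : ‖u‖ = 1) :
    mixedAreaMeas K {u} = hausdorffMixedVolume (n - 1) (fun i => face (K i) u) :=
  mixedAreaMeas_singleton_general n K hK u hu

end
end

section
/- Let K be a convex body in ℝⁿ containing the origin in its interior, let f:S^{n−1}→ℝ be continuous, and let (a,b) be an interval containing 0 on which h_K(u)+t·f(u) > 0 for all u∈S^{n−1} and t∈(a,b). Then for every u ∈ S^{n−1}, the function t ↦ h_{K_t(f)}(u) is concave on (a,b), where K_t(f)=W(h_K+tf). -/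
open scoped Pointwise NNReal ENNReal
open MeasureTheory Metric Set Filter

noncomputable section

/-! Concavity comes from `p • W(g₁) + q • W(g₂) ⊆ W(p g₁ + q g₂)` for `p, q ≥ 0`, since the
constraints `⟪x, v⟫ ≤ g v` defining a Wulff shape are linear in `x` and in `g`; taking support
functions turns this inclusion into `p h_{W(g₁)} + q h_{W(g₂)} ≤ h_{W(p g₁ + q g₂)}`. -/

theorem mul_sSup_add_mul_sSup_le {s t : Set ℝ} {p q c : ℝ} (hs : s.Nonempty) (ht : t.Nonempty)
    (hp : 0 ≤ p) (hq : 0 ≤ q) (h : ∀ x ∈ s, ∀ y ∈ t, p * x + q * y ≤ c) :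
    p * sSup s + q * sSup t ≤ c := by
  obtain ⟨x₀, hx₀⟩ := hs
  obtain ⟨y₀, hy₀⟩ := ht
  have hps₀ : (p • s).Nonempty := Set.smul_set_nonempty.2 ⟨x₀, hx₀⟩
  have hqt₀ : (q • t).Nonempty := Set.smul_set_nonempty.2 ⟨y₀, hy₀⟩
  have hps : BddAbove (p • s) := ⟨c - q * y₀, by
    rintro _ ⟨x, hx, rfl⟩
    linarith [h x hx y₀ hy₀, smul_eq_mul p x]⟩
  have hqt : BddAbove (q • t) := ⟨c - p * x₀, by
    rintro _ ⟨y, hy, rfl⟩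
    linarith [h x₀ hx₀ y hy, smul_eq_mul q y]⟩
  have hsum : sSup (p • s + q • t) ≤ c := by
    refine csSup_le (hps₀.add hqt₀) ?_
    rintro _ ⟨_, ⟨x, hx, rfl⟩, _, ⟨y, hy, rfl⟩, rfl⟩
    exact h x hx y hy
  rwa [csSup_add hps₀ hps hqt₀ hqt, Real.sSup_smul_of_nonneg hp,
    Real.sSup_smul_of_nonneg hq] at hsum

section Wulff

variable {n : ℕ}

theorem zero_mem_wulff {g : Euc n → ℝ} (hg : ∀ v : Euc n, ‖v‖ = 1 → 0 ≤ g v) :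
    (0 : Euc n) ∈ wulff g := fun v hv => by simpa using hg v hv

theorem bddAbove_inner_wulff (g : Euc n → ℝ) {u : Euc n} (hu : ‖u‖ = 1) :
    BddAbove ((fun x => (inner ℝ x u : ℝ)) '' wulff g) :=
  ⟨g u, by
    rintro _ ⟨x, hx, rfl⟩
    exact hx u hu⟩

theorem smul_add_smul_mem_wulff {g₁ g₂ : Euc n → ℝ} {x₁ x₂ : Euc n} {p q : ℝ}
    (hx₁ : x₁ ∈ wulff g₁) (hx₂ : x₂ ∈ wulff g₂) (hp : 0 ≤ p) (hq : 0 ≤ q) :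
    p • x₁ + q • x₂ ∈ wulff (fun v => p * g₁ v + q * g₂ v) := by
  intro v hv
  rw [inner_add_left, real_inner_smul_left, real_inner_smul_left]
  exact add_le_add (mul_le_mul_of_nonneg_left (hx₁ v hv) hp)
    (mul_le_mul_of_nonneg_left (hx₂ v hv) hq)

theorem mul_suppFn_wulff_add_mul_suppFn_wulff_le {g₁ g₂ : Euc n → ℝ} {u : Euc n} {p q : ℝ}
    (h₁ : (wulff g₁).Nonempty) (h₂ : (wulff g₂).Nonempty) (hp : 0 ≤ p) (hq : 0 ≤ q)
    (hu : ‖u‖ = 1) :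
    p * suppFn (wulff g₁) u + q * suppFn (wulff g₂) u
      ≤ suppFn (wulff (fun v => p * g₁ v + q * g₂ v)) u := by
  refine mul_sSup_add_mul_sSup_le (h₁.image _) (h₂.image _) hp hq ?_
  rintro _ ⟨x₁, hx₁, rfl⟩ _ ⟨x₂, hx₂, rfl⟩
  calc p * inner ℝ x₁ u + q * inner ℝ x₂ u = inner ℝ (p • x₁ + q • x₂) u := by
        rw [inner_add_left, real_inner_smul_left, real_inner_smul_left]
    _ ≤ _ := le_csSup (bddAbove_inner_wulff _ hu)
        ⟨_, smul_add_smul_mem_wulff hx₁ hx₂ hp hq, rfl⟩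

theorem concaveOn_suppFn_wulff_add_mul {s : Set ℝ} (hs : Convex ℝ s) (g f : Euc n → ℝ)
    (hpos : ∀ t ∈ s, ∀ v : Euc n, ‖v‖ = 1 → 0 ≤ g v + t * f v) {u : Euc n} (hu : ‖u‖ = 1) :
    ConcaveOn ℝ s (fun t => suppFn (wulff (fun v => g v + t * f v)) u) := by
  refine ⟨hs, fun t₁ ht₁ t₂ ht₂ p q hp hq hpq => ?_⟩
  have hcomb : (fun v => g v + (p • t₁ + q • t₂) * f v)
      = fun v => p * (g v + t₁ * f v) + q * (g v + t₂ * f v) := by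
    funext v
    rw [smul_eq_mul, smul_eq_mul]
    linear_combination (-g v) * hpq
  dsimp only
  rw [hcomb, smul_eq_mul, smul_eq_mul]
  exact mul_suppFn_wulff_add_mul_suppFn_wulff_le ⟨0, zero_mem_wulff (hpos t₁ ht₁)⟩
    ⟨0, zero_mem_wulff (hpos t₂ ht₂)⟩ hp hq hu

end Wulff

theorem suppFn_wulff_perturbation_concave_general (n : ℕ) (K : Set (Euc n))
    (f : Euc n → ℝ)
    (a b : ℝ)
    (hpos : ∀ t ∈ Set.Ioo a b, ∀ u : Euc n, ‖u‖ = 1 → 0 < suppFn K u + t * f u)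
    (u : Euc n) (hu : ‖u‖ = 1) :
    ConcaveOn ℝ (Set.Ioo a b)
      (fun t => suppFn (wulff (fun v => suppFn K v + t * f v)) u) :=
  concaveOn_suppFn_wulff_add_mul (convex_Ioo a b) _ _ (fun t ht v hv => (hpos t ht v hv).le) hu

/-- For a convex body `K` with `0 ∈ int K` and a continuous `f`, the support
function `t ↦ h_{K_t(f)}(u)` of the perturbation `K_t(f) = W(h_K + t f)` is concave in `t`. -/
theorem suppFn_wulff_perturbation_concave (n : ℕ) (K : Set (Euc n)) (hK : IsConvexBody K)
    (h0 : (0 : Euc n) ∈ interior K) (f : Euc n → ℝ) (hf : Continuous f)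
    (a b : ℝ) (ha : a < 0) (hb : 0 < b)
    (hpos : ∀ t ∈ Set.Ioo a b, ∀ u : Euc n, ‖u‖ = 1 → 0 < suppFn K u + t * f u)
    (u : Euc n) (hu : ‖u‖ = 1) :
    ConcaveOn ℝ (Set.Ioo a b)
      (fun t => suppFn (wulff (fun v => suppFn K v + t * f v)) u) :=
  suppFn_wulff_perturbation_concave_general n K f a b hpos u hu

end
end
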